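/- arXiv:2012.02768 — 2 statements merged into one kernel-verified Lean document; each statement's English description precedes it below -/
import Mathlib

section
/- Let M, N ≥ 1 and let W₁A, W₁B ∈ ℂ^{M×N} be the per-polarization excitation matrices of a dual-polarized uniform rectangular protoarray. Define the companion matrices W₂A = −J_M · conj(W₁B) · J_N and W₂B = J_M · conj(W₁A) · J_N, and the vertically expanded matrices WA = [W₁A ; W₂A] ∈ ℂ^{2M×N}, WB = [W₁B ; W₂B] ∈ ℂ^{2M×N} obtained by stacking the companion below the protoarray (row index m of the companion block corresponds to overall row M+m). Then for all ψy, ψz ∈ ℝ: |∑_{m<2M, n<N} (WA)_{m,n} e^{i(nψy+mψz)}|² + |∑_{m<2M, n<N} (WB)_{m,n} e^{i(nψy+mψz)}|² = 2·(|∑_{m<M, n<N} (W₁A)_{m,n} e^{i(nψy+mψz)}|² + |∑_{m<M, n<N} (W₁B)_{m,n} e^{i(nψy+mψz)}|²). -/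
open Finset

/-- `(m,n)` entry of the steering matrix of an `M×N` uniform rectangular array:
`exp(i(n ψy + m ψz))`. -/
noncomputable def steerM (M N : ℕ) (ψy ψz : ℝ) : Fin M → Fin N → ℂ :=
  fun m n => Complex.exp (Complex.I * (((n : ℕ) : ℂ) * (ψy : ℂ) + ((m : ℕ) : ℂ) * (ψz : ℂ)))

/-- Radiated far field of an `M×N` array with excitation `W`:
`F(W) = ∑_{m,n} W m n · exp(i(n ψy + m ψz))`. -/
noncomputable def fieldF {M N : ℕ} (W : Fin M → Fin N → ℂ) (ψy ψz : ℝ) : ℂ :=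
  ∑ m, ∑ n, W m n * steerM M N ψy ψz m n

/-!
Stacking a block `V` below `U` multiplies the far field of `V` by the phase `exp(i M ψz)`, and
conjugating and flipping an excitation both ways conjugates its far field up to the phase
`exp(i((N-1)ψy + (M-1)ψz))`. So with `a = F(W₁A)`, `b = F(W₁B)` and a unimodular `c`, the
expanded fields are `a - c·conj b` and `b + c·conj a`, whose cross terms cancel in
`|a - c·conj b|² + |b + c·conj a|² = 2(|a|² + |b|²)`.
-/

lemma norm_sub_mul_conj_sq_add_norm_add_mul_conj_sq (a b c : ℂ) (hc : ‖c‖ = 1) :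
    ‖a - c * (starRingEnd ℂ) b‖ ^ 2 + ‖b + c * (starRingEnd ℂ) a‖ ^ 2
      = 2 * (‖a‖ ^ 2 + ‖b‖ ^ 2) := by
  have hc' : Complex.normSq c = 1 := by rw [← Complex.sq_norm, hc, one_pow]
  simp only [Complex.sq_norm, Complex.normSq_apply, Complex.sub_re, Complex.sub_im,
    Complex.add_re, Complex.add_im, Complex.mul_re, Complex.mul_im, Complex.conj_re,
    Complex.conj_im] at hc' ⊢
  linear_combination (a.re ^ 2 + a.im ^ 2 + b.re ^ 2 + b.im ^ 2) * hc'

section Field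

variable {M K N : ℕ} (ψy ψz : ℝ)

lemma steerM_natAdd (m : Fin K) (n : Fin N) :
    steerM (M + K) N ψy ψz (Fin.natAdd M m) n
      = Complex.exp (↑(M * ψz) * Complex.I) * steerM K N ψy ψz m n := by
  simp only [steerM, ← Complex.exp_add, Fin.val_natAdd]
  push_cast
  ring_nf

lemma steerM_rev_rev (m : Fin M) (n : Fin N) :
    steerM M N ψy ψz m.rev n.rev
      = Complex.exp (↑((N - 1) * ψy + (M - 1) * ψz) * Complex.I)
        * (starRingEnd ℂ) (steerM M N ψy ψz m n) := by
  simp only [steerM, ← Complex.exp_conj, ← Complex.exp_add, map_add, map_mul, Complex.conj_I,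
    Complex.conj_natCast, Complex.conj_ofReal, Fin.val_rev]
  rw [Nat.cast_sub m.isLt, Nat.cast_sub n.isLt]
  push_cast
  ring_nf

lemma fieldF_append (U : Fin M → Fin N → ℂ) (V : Fin K → Fin N → ℂ) :
    fieldF (fun m n => Fin.append (fun i => U i n) (fun i => V i n) m) ψy ψz
      = fieldF U ψy ψz + Complex.exp (↑(M * ψz) * Complex.I) * fieldF V ψy ψz := by
  simp only [fieldF, Fin.sum_univ_add, Fin.append_left, Fin.append_right, steerM_natAdd,
    Finset.mul_sum]
  congr 1
  exact Finset.sum_congr rfl fun m _ => Finset.sum_congr rfl fun n _ => by ring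

lemma fieldF_neg (W : Fin M → Fin N → ℂ) :
    fieldF (fun m n => -W m n) ψy ψz = -fieldF W ψy ψz := by
  simp only [fieldF, neg_mul, Finset.sum_neg_distrib]

lemma fieldF_conj_rev_rev (W : Fin M → Fin N → ℂ) :
    fieldF (fun m n => (starRingEnd ℂ) (W m.rev n.rev)) ψy ψz
      = Complex.exp (↑((N - 1) * ψy + (M - 1) * ψz) * Complex.I)
        * (starRingEnd ℂ) (fieldF W ψy ψz) := by
  simp only [fieldF, map_sum, Finset.mul_sum]
  rw [← Equiv.sum_comp Fin.revPerm]
  refine Finset.sum_congr rfl fun m _ => ?_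
  rw [← Equiv.sum_comp Fin.revPerm]
  refine Finset.sum_congr rfl fun n _ => ?_
  simp only [Fin.revPerm_apply, Fin.rev_rev, steerM_rev_rev, map_mul]
  ring

end Field

theorem asi_ura_vertical_expansion_preserves_pattern_general
    (M N : ℕ)
    (W1A W1B : Fin M → Fin N → ℂ)
    (W2A W2B : Fin M → Fin N → ℂ)
    (h2A : W2A = fun m n => -(starRingEnd ℂ) (W1B m.rev n.rev))
    (h2B : W2B = fun m n => (starRingEnd ℂ) (W1A m.rev n.rev))
    (WA WB : Fin (M + M) → Fin N → ℂ)
    (hA : WA = fun m n => Fin.append (fun i => W1A i n) (fun i => W2A i n) m)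
    (hB : WB = fun m n => Fin.append (fun i => W1B i n) (fun i => W2B i n) m)
    (ψy ψz : ℝ) :
    ‖fieldF WA ψy ψz‖ ^ 2 + ‖fieldF WB ψy ψz‖ ^ 2
      = 2 * (‖fieldF W1A ψy ψz‖ ^ 2 + ‖fieldF W1B ψy ψz‖ ^ 2) := by
  subst h2A h2B hA hB
  set c := Complex.exp (↑(M * ψz) * Complex.I)
    * Complex.exp (↑((N - 1) * ψy + (M - 1) * ψz) * Complex.I)
  have hc : ‖c‖ = 1 := by simp only [c, norm_mul, Complex.norm_exp_ofReal_mul_I, mul_one]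
  have hfA : fieldF (fun m n => Fin.append (fun i => W1A i n)
      (fun i => -(starRingEnd ℂ) (W1B i.rev n.rev)) m) ψy ψz
        = fieldF W1A ψy ψz - c * (starRingEnd ℂ) (fieldF W1B ψy ψz) := by
    rw [fieldF_append, fieldF_neg, fieldF_conj_rev_rev]
    ring
  have hfB : fieldF (fun m n => Fin.append (fun i => W1B i n)
      (fun i => (starRingEnd ℂ) (W1A i.rev n.rev)) m) ψy ψz
        = fieldF W1B ψy ψz + c * (starRingEnd ℂ) (fieldF W1A ψy ψz) := by
    rw [fieldF_append, fieldF_conj_rev_rev]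
    ring
  rw [hfA, hfB]
  exact norm_sub_mul_conj_sq_add_norm_add_mul_conj_sq _ _ c hc

theorem asi_ura_vertical_expansion_preserves_pattern
    (M N : ℕ) (hM : 1 ≤ M) (hN : 1 ≤ N)
    (W1A W1B : Fin M → Fin N → ℂ)
    (W2A W2B : Fin M → Fin N → ℂ)
    (h2A : W2A = fun m n => -(starRingEnd ℂ) (W1B m.rev n.rev))
    (h2B : W2B = fun m n => (starRingEnd ℂ) (W1A m.rev n.rev))
    (WA WB : Fin (M + M) → Fin N → ℂ)
    (hA : WA = fun m n => Fin.append (fun i => W1A i n) (fun i => W2A i n) m)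
    (hB : WB = fun m n => Fin.append (fun i => W1B i n) (fun i => W2B i n) m)
    (ψy ψz : ℝ) :
    ‖fieldF WA ψy ψz‖ ^ 2 + ‖fieldF WB ψy ψz‖ ^ 2
      = 2 * (‖fieldF W1A ψy ψz‖ ^ 2 + ‖fieldF W1B ψy ψz‖ ^ 2) :=
  asi_ura_vertical_expansion_preserves_pattern_general M N W1A W1B W2A W2B h2A h2B WA WB hA hB ψy ψz
end

section
/- Let N ≥ 1 and let wA, wB ∈ ℂ^N be the per-polarization weights of a dual-polarized beam. Define the second beam w′A = −J_N·conj(wB), w′B = J_N·conj(wA). Then for every ψ ∈ ℝ the second beam has an identical total power pattern and is polarization-orthogonal to the first in every direction: (i) |w′Aᵀ a_N(ψ)|² + |w′Bᵀ a_N(ψ)|² = |wAᵀ a_N(ψ)|² + |wBᵀ a_N(ψ)|², and (ii) conj(wAᵀ a_N(ψ))·(w′Aᵀ a_N(ψ)) + conj(wBᵀ a_N(ψ))·(w′Bᵀ a_N(ψ)) = 0. -/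
open Finset

/-- Steering vector of an `N`-element uniform linear array at electrical angle `ψ`:
`(a_N(ψ))_n = exp(i n ψ)`. -/
noncomputable def steer (N : ℕ) (ψ : ℝ) : Fin N → ℂ :=
  fun n => Complex.exp (Complex.I * ((n : ℕ) : ℂ) * (ψ : ℂ))

/-- Bilinear dot product `wᵀ a = ∑ n, w n * a n`. -/
noncomputable def dotp {N : ℕ} (w a : Fin N → ℂ) : ℂ := ∑ n, w n * a n

open ComplexConjugate

/-
The steering vector is conjugate-centrosymmetric: reversing it is the same as conjugating it and
multiplying by the unimodular phase `c = exp(i (N-1) ψ)`. Hence reversing and conjugating a weight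
vector conjugates its array response and multiplies it by `c`: with `x = wAᵀa`, `y = wBᵀa` the second
beam responds with `(-c ȳ, c x̄)`, which has the same power `|x|² + |y|²` and satisfies
`x̄ (-c ȳ) + ȳ (c x̄) = 0`.
-/

lemma steer_rev (N : ℕ) (ψ : ℝ) (n : Fin N) :
    steer N ψ n.rev = Complex.exp ((((N : ℝ) - 1) * ψ : ℝ) * Complex.I) * conj (steer N ψ n) := by
  have hrev : ((n.rev : ℕ) : ℂ) = (N : ℂ) - 1 - (n : ℕ) := by
    rw [Fin.val_rev, Nat.cast_sub (by omega : (n : ℕ) + 1 ≤ N)]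
    push_cast
    ring
  simp only [steer, ← Complex.exp_conj, map_mul, Complex.conj_I, Complex.conj_natCast,
    Complex.conj_ofReal, ← Complex.exp_add, hrev]
  congr 1
  push_cast
  ring

lemma dotp_neg_left {N : ℕ} (w a : Fin N → ℂ) : dotp (fun n => -w n) a = -dotp w a := by
  simp only [dotp, neg_mul, sum_neg_distrib]

lemma dotp_conj_rev_left {N : ℕ} (w a : Fin N → ℂ) (c : ℂ)
    (ha : ∀ n, a n.rev = c * conj (a n)) :
    dotp (fun n => conj (w n.rev)) a = c * conj (dotp w a) := by
  simp only [dotp, map_sum, mul_sum, map_mul]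
  refine Fintype.sum_equiv Fin.revPerm _ _ fun n => ?_
  have han := ha n.rev
  rw [Fin.rev_rev] at han
  rw [Fin.revPerm_apply, han]
  ring

theorem second_beam_same_power_and_orthogonal_polarization_general
    (N : ℕ) (wA wB : Fin N → ℂ)
    (w'A w'B : Fin N → ℂ)
    (h'A : w'A = fun n => -(starRingEnd ℂ) (wB n.rev))
    (h'B : w'B = fun n => (starRingEnd ℂ) (wA n.rev))
    (ψ : ℝ) :
    (‖dotp w'A (steer N ψ)‖ ^ 2 + ‖dotp w'B (steer N ψ)‖ ^ 2
        = ‖dotp wA (steer N ψ)‖ ^ 2 + ‖dotp wB (steer N ψ)‖ ^ 2)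
    ∧ (starRingEnd ℂ) (dotp wA (steer N ψ)) * dotp w'A (steer N ψ)
        + (starRingEnd ℂ) (dotp wB (steer N ψ)) * dotp w'B (steer N ψ) = 0 := by
  set c := Complex.exp ((((N : ℝ) - 1) * ψ : ℝ) * Complex.I)
  have hc : ‖c‖ = 1 := Complex.norm_exp_ofReal_mul_I _
  have hA : dotp w'A (steer N ψ) = -(c * conj (dotp wB (steer N ψ))) := by
    rw [h'A, dotp_neg_left, dotp_conj_rev_left _ _ c (steer_rev N ψ)]
  have hB : dotp w'B (steer N ψ) = c * conj (dotp wA (steer N ψ)) := by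
    rw [h'B, dotp_conj_rev_left _ _ c (steer_rev N ψ)]
  rw [hA, hB]
  constructor
  · simp only [norm_neg, norm_mul, hc, one_mul, Complex.norm_conj]
    ring
  · ring

theorem second_beam_same_power_and_orthogonal_polarization
    (N : ℕ) (hN : 1 ≤ N) (wA wB : Fin N → ℂ)
    (w'A w'B : Fin N → ℂ)
    (h'A : w'A = fun n => -(starRingEnd ℂ) (wB n.rev))
    (h'B : w'B = fun n => (starRingEnd ℂ) (wA n.rev))
    (ψ : ℝ) :
    (‖dotp w'A (steer N ψ)‖ ^ 2 + ‖dotp w'B (steer N ψ)‖ ^ 2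
        = ‖dotp wA (steer N ψ)‖ ^ 2 + ‖dotp wB (steer N ψ)‖ ^ 2)
    ∧ (starRingEnd ℂ) (dotp wA (steer N ψ)) * dotp w'A (steer N ψ)
        + (starRingEnd ℂ) (dotp wB (steer N ψ)) * dotp w'B (steer N ψ) = 0 :=
  second_beam_same_power_and_orthogonal_polarization_general N wA wB w'A w'B h'A h'B ψ
end
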